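/- arXiv:math/0610736 — 3 statements merged into one kernel-verified Lean document; each statement's English description precedes it below -/
import Mathlib

section
/- Let C ⊆ ℝ be an interval, x₁,…,xₙ ∈ C, φ : C → ℝ convex, and B = [b_{ij}], C' = [c_{ij}] two n×n doubly stochastic matrices. Then φ((x₁+⋯+xₙ)/n) ≤ (1/n)∑_{i=1}^n A(φ; ∑_{j=1}^n b_{ij}xⱼ, ∑_{j=1}^n c_{ij}xⱼ) ≤ (φ(x₁)+⋯+φ(xₙ))/n, where A(f;a,b) = (1/(b−a))∫_a^b f(x) dx for a ≠ b and A(f;a,a) = f(a). -/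
open Finset MeasureTheory

/-- The arithmetic (integral) mean `A(f;a,b)` of a function `f` over the interval
with endpoints `a` and `b`, with `A(f;a,a) = f a`. -/
noncomputable def intMean (f : ℝ → ℝ) (a b : ℝ) : ℝ :=
  if a = b then f a else (b - a)⁻¹ * ∫ x in a..b, f x

open Set Matrix

/-!
Hermite–Hadamard: averaging `φ` with its reflection `t ↦ φ (a + b - t)` does not change its
integral over `[a, b]`, and by convexity this average lies pointwise between `φ ((a + b) / 2)` and
`(φ a + φ b) / 2`; hence so does the integral mean `A(φ; a, b)`.

Put `u = Bx` and `v = C'x`. Their entries are convex combinations of the `x_j`, and since the column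
sums are one, `∑ u_i = ∑ v_i = ∑ x_j`. The lower bound is Jensen's inequality for the midpoints
`(u_i + v_i) / 2` followed by the left Hermite–Hadamard inequality on each `[u_i, v_i]`. The upper
bound is the right Hermite–Hadamard inequality followed by Jensen for each row,
`φ u_i ≤ ∑_j b_ij φ x_j`, and summing over `i` with the column sums again.
-/

section IntMean

variable {f : ℝ → ℝ} {a b t m : ℝ}

lemma intMean_comm (f : ℝ → ℝ) (a b : ℝ) : intMean f b a = intMean f a b := by
  rcases eq_or_ne a b with rfl | h
  · rfl
  · rw [intMean, intMean, if_neg h, if_neg h.symm, intervalIntegral.integral_symm, ← neg_sub,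
      inv_neg, neg_mul_neg]

lemma le_intMean (hf : IntervalIntegrable f volume a b) (h : ∀ t ∈ uIcc a b, m ≤ f t) :
    m ≤ intMean f a b := by
  wlog hab : a ≤ b generalizing a b
  · rw [← intMean_comm]
    exact this hf.symm (by rwa [Set.uIcc_comm]) (le_of_not_ge hab)
  rcases hab.eq_or_lt with rfl | hlt
  · simpa [intMean] using h a left_mem_uIcc
  rw [intMean, if_neg hlt.ne, le_inv_mul_iff₀ (sub_pos.2 hlt)]
  simpa [mul_comm] using intervalIntegral.integral_mono_on hlt.le intervalIntegrable_const hf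
    fun t ht => h t (Icc_subset_uIcc ht)

lemma intMean_le (hf : IntervalIntegrable f volume a b) (h : ∀ t ∈ uIcc a b, f t ≤ m) :
    intMean f a b ≤ m := by
  wlog hab : a ≤ b generalizing a b
  · rw [← intMean_comm]
    exact this hf.symm (by rwa [Set.uIcc_comm]) (le_of_not_ge hab)
  rcases hab.eq_or_lt with rfl | hlt
  · simpa [intMean] using h a left_mem_uIcc
  rw [intMean, if_neg hlt.ne, inv_mul_le_iff₀ (sub_pos.2 hlt)]
  simpa [mul_comm] using intervalIntegral.integral_mono_on hlt.le hf intervalIntegrable_const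
    fun t ht => h t (Icc_subset_uIcc ht)

lemma add_sub_mem_uIcc (ht : t ∈ uIcc a b) : a + b - t ∈ uIcc a b := by
  rw [Set.uIcc, Set.mem_Icc] at ht ⊢
  constructor <;> linarith [min_add_max a b]

noncomputable def reflectAvg (f : ℝ → ℝ) (a b : ℝ) (t : ℝ) : ℝ := (f t + f (a + b - t)) / 2

lemma IntervalIntegrable.comp_add_sub (hf : IntervalIntegrable f volume a b) :
    IntervalIntegrable (fun t => f (a + b - t)) volume a b := by
  simpa using (hf.comp_sub_left (a + b)).symm

lemma IntervalIntegrable.reflectAvg (hf : IntervalIntegrable f volume a b) :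
    IntervalIntegrable (reflectAvg f a b) volume a b :=
  (hf.add hf.comp_add_sub).div_const 2

lemma intMean_reflectAvg (hf : IntervalIntegrable f volume a b) :
    intMean (reflectAvg f a b) a b = intMean f a b := by
  unfold intMean reflectAvg
  split_ifs with hab
  · subst hab
    simp
  · have hrefl : ∫ t in a..b, f (a + b - t) = ∫ t in a..b, f t := by
      simp [intervalIntegral.integral_comp_sub_left f (a + b)]
    rw [intervalIntegral.integral_div, intervalIntegral.integral_add hf hf.comp_add_sub, hrefl]
    ring

end IntMean

section HermiteHadamard

variable {φ : ℝ → ℝ} {a b t : ℝ}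

lemma ConvexOn.map_add_div_two_le_reflectAvg (hφ : ConvexOn ℝ (uIcc a b) φ)
    (ht : t ∈ uIcc a b) : φ ((a + b) / 2) ≤ reflectAvg φ a b t := by
  have h := hφ.2 ht (add_sub_mem_uIcc ht) one_half_pos.le one_half_pos.le (add_halves 1)
  have hmid : (1 / 2 : ℝ) • t + (1 / 2 : ℝ) • (a + b - t) = (a + b) / 2 := by
    simp only [smul_eq_mul]
    ring
  rw [hmid] at h
  simp only [smul_eq_mul] at h
  rw [reflectAvg]
  linarith

lemma ConvexOn.reflectAvg_le_add_div_two (hφ : ConvexOn ℝ (uIcc a b) φ)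
    (ht : t ∈ uIcc a b) : reflectAvg φ a b t ≤ (φ a + φ b) / 2 := by
  rw [← segment_eq_uIcc] at ht
  obtain ⟨p, q, hp, hq, hpq, rfl⟩ := ht
  have h₁ := hφ.2 left_mem_uIcc right_mem_uIcc hp hq hpq
  have h₂ := hφ.2 left_mem_uIcc right_mem_uIcc hq hp (by linarith)
  have hrefl : a + b - (p • a + q • b) = q • a + p • b := by
    simp only [smul_eq_mul]
    linear_combination (-(a + b)) * hpq
  rw [reflectAvg, hrefl]
  simp only [smul_eq_mul] at h₁ h₂ ⊢
  linear_combination (h₁ + h₂ + (φ a + φ b) * hpq) / 2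

lemma ConvexOn.intervalIntegrable (hφ : ConvexOn ℝ (uIcc a b) φ) :
    IntervalIntegrable φ volume a b := by
  set M := max (φ a) (φ b)
  have hle : ∀ t ∈ uIcc a b, φ t ≤ M := fun t ht =>
    hφ.le_on_segment left_mem_uIcc right_mem_uIcc (by rwa [segment_eq_uIcc])
  -- a convex function is bounded below by reflecting its upper bound through the midpoint
  have hge : ∀ t ∈ uIcc a b, 2 * φ ((a + b) / 2) - M ≤ φ t := fun t ht => by
    have := hφ.map_add_div_two_le_reflectAvg ht
    have := hle _ (add_sub_mem_uIcc ht)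
    simp only [reflectAvg] at *
    linarith
  refine IntegrableOn.intervalIntegrable ?_
  rw [Set.uIcc, integrableOn_Icc_iff_integrableOn_Ioo]
  have hIoo : Ioo (a ⊓ b) (a ⊔ b) ⊆ uIcc a b := Ioo_subset_Icc_self
  refine ⟨(hφ.continuousOn_interior.mono ?_).aestronglyMeasurable measurableSet_Ioo,
    .restrict_of_bounded _ measure_Ioo_lt_top
      (ae_restrict_of_forall_mem measurableSet_Ioo fun t ht =>
        abs_le_max_abs_abs (hge t (hIoo ht)) (hle t (hIoo ht)))⟩
  rw [Set.uIcc, interior_Icc]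

theorem ConvexOn.map_add_div_two_le_intMean (hφ : ConvexOn ℝ (uIcc a b) φ) :
    φ ((a + b) / 2) ≤ intMean φ a b := by
  rw [← intMean_reflectAvg hφ.intervalIntegrable]
  exact le_intMean hφ.intervalIntegrable.reflectAvg fun t ht =>
    hφ.map_add_div_two_le_reflectAvg ht

theorem ConvexOn.intMean_le_add_div_two (hφ : ConvexOn ℝ (uIcc a b) φ) :
    intMean φ a b ≤ (φ a + φ b) / 2 := by
  rw [← intMean_reflectAvg hφ.intervalIntegrable]
  exact intMean_le hφ.intervalIntegrable.reflectAvg fun t ht =>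
    hφ.reflectAvg_le_add_div_two ht

end HermiteHadamard

section Stochastic

variable {𝕜 ι : Type*} [Field 𝕜] [LinearOrder 𝕜] [IsStrictOrderedRing 𝕜] [Fintype ι]
  {C : Set 𝕜} {φ : 𝕜 → 𝕜} {x : ι → 𝕜}

lemma Convex.mulVec_mem_of_mem_rowStochastic [DecidableEq ι] {P : Matrix ι ι 𝕜}
    (hC : Convex 𝕜 C) (hP : P ∈ rowStochastic 𝕜 ι) (hx : ∀ j, x j ∈ C) (i : ι) :
    (P *ᵥ x) i ∈ C :=
  hC.sum_mem (fun _ _ => nonneg_of_mem_rowStochastic hP) (sum_row_of_mem_rowStochastic hP i)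
    fun j _ => hx j

lemma ConvexOn.map_mulVec_le_of_mem_rowStochastic [DecidableEq ι] {P : Matrix ι ι 𝕜}
    (hφ : ConvexOn 𝕜 C φ) (hP : P ∈ rowStochastic 𝕜 ι) (hx : ∀ j, x j ∈ C) (i : ι) :
    φ ((P *ᵥ x) i) ≤ (P *ᵥ (φ ∘ x)) i :=
  hφ.map_sum_le (fun _ _ => nonneg_of_mem_rowStochastic hP) (sum_row_of_mem_rowStochastic hP i)
    fun j _ => hx j

lemma ConvexOn.map_sum_div_card_le [Nonempty ι] (hφ : ConvexOn 𝕜 C φ) (hx : ∀ i, x i ∈ C) :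
    φ ((∑ i, x i) / Fintype.card ι) ≤ (∑ i, φ (x i)) / Fintype.card ι := by
  have hw : ∑ _i : ι, (Fintype.card ι : 𝕜)⁻¹ = 1 := by simp
  simpa [div_eq_inv_mul, mul_sum] using
    hφ.map_sum_le (fun _ _ => by positivity) hw fun i _ => hx i

end Stochastic

section Refinement

variable {ι : Type*} [Fintype ι] [DecidableEq ι] {C : Set ℝ} {φ : ℝ → ℝ} {x : ι → ℝ}
  {P Q : Matrix ι ι ℝ} {a b : ℝ}

lemma ConvexOn.restrict_uIcc (hφ : ConvexOn ℝ C φ) (ha : a ∈ C) (hb : b ∈ C) :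
    ConvexOn ℝ (uIcc a b) φ :=
  hφ.subset (hφ.1.ordConnected.uIcc_subset ha hb) (convex_uIcc a b)

theorem ConvexOn.map_sum_div_card_le_sum_intMean [Nonempty ι] (hφ : ConvexOn ℝ C φ)
    (hx : ∀ j, x j ∈ C) (hP : P ∈ doublyStochastic ℝ ι) (hQ : Q ∈ doublyStochastic ℝ ι) :
    φ ((∑ j, x j) / Fintype.card ι) ≤
      (∑ i, intMean φ ((P *ᵥ x) i) ((Q *ᵥ x) i)) / Fintype.card ι := by
  rw [mem_doublyStochastic_iff_mem_rowStochastic_and_mem_colStochastic] at hP hQ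
  have hu := hφ.1.mulVec_mem_of_mem_rowStochastic hP.1 hx
  have hv := hφ.1.mulVec_mem_of_mem_rowStochastic hQ.1 hx
  have hmid (i : ι) : ((P *ᵥ x) i + (Q *ᵥ x) i) / 2 ∈ C := by
    convert hφ.1 (hu i) (hv i) one_half_pos.le one_half_pos.le (add_halves 1) using 1
    simp only [smul_eq_mul]
    ring
  have hsum : ∑ j, x j = ∑ i, ((P *ᵥ x) i + (Q *ᵥ x) i) / 2 := by
    rw [← sum_div, sum_add_distrib, sum_mulVec_of_mem_colStochastic hP.2,
      sum_mulVec_of_mem_colStochastic hQ.2, add_self_div_two]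
  calc φ ((∑ j, x j) / Fintype.card ι)
      = φ ((∑ i, ((P *ᵥ x) i + (Q *ᵥ x) i) / 2) / Fintype.card ι) := by rw [hsum]
    _ ≤ (∑ i, φ (((P *ᵥ x) i + (Q *ᵥ x) i) / 2)) / Fintype.card ι :=
      hφ.map_sum_div_card_le hmid
    _ ≤ (∑ i, intMean φ ((P *ᵥ x) i) ((Q *ᵥ x) i)) / Fintype.card ι := by
      gcongr with i
      exact (hφ.restrict_uIcc (hu i) (hv i)).map_add_div_two_le_intMean

theorem ConvexOn.sum_intMean_le_sum_map (hφ : ConvexOn ℝ C φ) (hx : ∀ j, x j ∈ C)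
    (hP : P ∈ doublyStochastic ℝ ι) (hQ : Q ∈ doublyStochastic ℝ ι) :
    ∑ i, intMean φ ((P *ᵥ x) i) ((Q *ᵥ x) i) ≤ ∑ j, φ (x j) := by
  rw [mem_doublyStochastic_iff_mem_rowStochastic_and_mem_colStochastic] at hP hQ
  have hu := hφ.1.mulVec_mem_of_mem_rowStochastic hP.1 hx
  have hv := hφ.1.mulVec_mem_of_mem_rowStochastic hQ.1 hx
  calc ∑ i, intMean φ ((P *ᵥ x) i) ((Q *ᵥ x) i)
      ≤ ∑ i, ((P *ᵥ (φ ∘ x)) i + (Q *ᵥ (φ ∘ x)) i) / 2 := by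
        gcongr with i
        refine (hφ.restrict_uIcc (hu i) (hv i)).intMean_le_add_div_two.trans ?_
        gcongr
        · exact hφ.map_mulVec_le_of_mem_rowStochastic hP.1 hx i
        · exact hφ.map_mulVec_le_of_mem_rowStochastic hQ.1 hx i
    _ = ∑ j, φ (x j) := by
        rw [← sum_div, sum_add_distrib, sum_mulVec_of_mem_colStochastic hP.2,
          sum_mulVec_of_mem_colStochastic hQ.2, add_self_div_two]
        rfl

end Refinement

theorem jensen_refinement_two_doubly_stochastic_intMean_general
    {n : ℕ} (hn : 0 < n)
    (C : Set ℝ) (x : Fin n → ℝ) (hx : ∀ j, x j ∈ C)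
    (φ : ℝ → ℝ) (hφ : ConvexOn ℝ C φ)
    (b c : Fin n → Fin n → ℝ)
    (hb0 : ∀ i j, 0 ≤ b i j) (hbrow : ∀ i, ∑ j, b i j = 1) (hbcol : ∀ j, ∑ i, b i j = 1)
    (hc0 : ∀ i j, 0 ≤ c i j) (hcrow : ∀ i, ∑ j, c i j = 1) (hccol : ∀ j, ∑ i, c i j = 1) :
    φ ((∑ j, x j) / n) ≤
        (n : ℝ)⁻¹ * ∑ i, intMean φ (∑ j, b i j * x j) (∑ j, c i j * x j) ∧
      (n : ℝ)⁻¹ * ∑ i, intMean φ (∑ j, b i j * x j) (∑ j, c i j * x j) ≤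
        (∑ j, φ (x j)) / n := by
  have : Nonempty (Fin n) := ⟨⟨0, hn⟩⟩
  have hB : of b ∈ doublyStochastic ℝ (Fin n) := mem_doublyStochastic_iff_sum.2 ⟨hb0, hbrow, hbcol⟩
  have hC' : of c ∈ doublyStochastic ℝ (Fin n) :=
    mem_doublyStochastic_iff_sum.2 ⟨hc0, hcrow, hccol⟩
  have lower := hφ.map_sum_div_card_le_sum_intMean hx hB hC'
  have upper := hφ.sum_intMean_le_sum_map hx hB hC'
  simp only [Fintype.card_fin, mulVec, dotProduct, of_apply] at lower upper
  rw [inv_mul_eq_div]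
  exact ⟨lower, by gcongr⟩

/-- Hermite–Hadamard type refinement of Jensen's inequality with equal weights via
two doubly stochastic matrices, on an interval of `ℝ`. -/
theorem jensen_refinement_two_doubly_stochastic_intMean
    {n : ℕ} (hn : 0 < n)
    (C : Set ℝ) (hC : Convex ℝ C) (x : Fin n → ℝ) (hx : ∀ j, x j ∈ C)
    (φ : ℝ → ℝ) (hφ : ConvexOn ℝ C φ)
    (b c : Fin n → Fin n → ℝ)
    (hb0 : ∀ i j, 0 ≤ b i j) (hbrow : ∀ i, ∑ j, b i j = 1) (hbcol : ∀ j, ∑ i, b i j = 1)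
    (hc0 : ∀ i j, 0 ≤ c i j) (hcrow : ∀ i, ∑ j, c i j = 1) (hccol : ∀ j, ∑ i, c i j = 1) :
    φ ((∑ j, x j) / n) ≤
        (n : ℝ)⁻¹ * ∑ i, intMean φ (∑ j, b i j * x j) (∑ j, c i j * x j) ∧
      (n : ℝ)⁻¹ * ∑ i, intMean φ (∑ j, b i j * x j) (∑ j, c i j * x j) ≤
        (∑ j, φ (x j)) / n :=
  jensen_refinement_two_doubly_stochastic_intMean_general hn C x hx φ hφ b c hb0 hbrow hbcol hc0
    hcrow hccol
end

section
/- Let μ = (μ₁,…,μ_m) and λ = (λ₁,…,λ_n) be probability vectors, ω₁ and ω₂ two weight functions with respect to μ and λ, and x₁,…,xₙ ∈ (0,1/2]. Let Aₙ = ∑_{j=1}^n λⱼxⱼ, Gₙ = ∏_{j=1}^n xⱼ^{λⱼ}, Aₙ' = ∑_{j=1}^n λⱼ(1−xⱼ), Gₙ' = ∏_{j=1}^n (1−xⱼ)^{λⱼ}. Then Aₙ'/Aₙ ≤ ∏_{i=1}^m ( I(∑_{j=1}^n ω₁(i,j)λⱼ(1−xⱼ), ∑_{j=1}^n ω₂(i,j)λⱼ(1−xⱼ))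 / I(∑_{j=1}^n ω₁(i,j)λⱼxⱼ, ∑_{j=1}^n ω₂(i,j)λⱼxⱼ) )^{μᵢ} ≤ Gₙ'/Gₙ. In particular this refines Ky Fan's inequality Aₙ'/Aₙ ≤ Gₙ'/Gₙ. -/
/-!
Put `g t = log (1 - t) - log t` (`kyFanLog`); it is convex on `(0, 1/2]` because
`g'' t = 1 / t ^ 2 - 1 / (1 - t) ^ 2 ≥ 0` there. Since `log I(a, b)` is the mean value of `log`
on `[a, b]`, the logarithm of `I(1 - a, 1 - b) / I(a, b)` is the mean value of `g` on `[a, b]`,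
so by the Hermite–Hadamard inequality it lies between `g ((a + b) / 2)` and `(g a + g b) / 2`.
Write `aᵢ = ∑ⱼ ω₁(i,j) λⱼ xⱼ` and `bᵢ = ∑ⱼ ω₂(i,j) λⱼ xⱼ`; by the row sums, `1 - aᵢ` and
`1 - bᵢ` are the arguments of the upper identric means. After taking logarithms the three
members of the claim are `g(Aₙ)`, `∑ᵢ μᵢ log (I(1 - aᵢ, 1 - bᵢ) / I(aᵢ, bᵢ))` and
`∑ⱼ λⱼ g(xⱼ)`. The column sums of a weight function give `∑ᵢ μᵢ (aᵢ + bᵢ) / 2 = Aₙ` and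
`∑ᵢ μᵢ ∑ⱼ ω(i,j) λⱼ g(xⱼ) = ∑ⱼ λⱼ g(xⱼ)`, and its row sums make `j ↦ ω(i,j) λⱼ` a probability
vector, so both inequalities are Jensen's inequality for `g` combined with one of the
Hermite–Hadamard bounds.
-/

open Finset

/-- The identric mean: `I(a,b) = a` if `a = b`, and
`I(a,b) = (1/e)(b^b/a^a)^{1/(b-a)}` otherwise. -/
noncomputable def identric (a b : ℝ) : ℝ :=
  if a = b then a else (Real.exp 1)⁻¹ * (b ^ b / a ^ a) ^ (b - a)⁻¹

open Real Set intervalIntegral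
open MeasureTheory (volume)

theorem identric_self (a : ℝ) : identric a a = a := if_pos rfl

theorem identric_pos {a b : ℝ} (ha : 0 < a) (hb : 0 < b) : 0 < identric a b := by
  unfold identric
  split_ifs
  · exact ha
  · positivity

theorem mul_log_identric {a b : ℝ} (ha : 0 < a) (hb : 0 < b) :
    (b - a) * log (identric a b) = ∫ t in a..b, log t := by
  rcases eq_or_ne a b with rfl | hab
  · simp
  rw [identric, if_neg hab, log_mul (by positivity) (by positivity), log_inv, log_exp,
    log_rpow (by positivity), log_div (by positivity) (by positivity), log_rpow hb, log_rpow ha,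
    integral_log]
  field_simp
  ring

theorem identric_comm {a b : ℝ} (ha : 0 < a) (hb : 0 < b) : identric a b = identric b a := by
  rcases eq_or_ne a b with rfl | hab
  · rfl
  refine log_injOn_pos (identric_pos ha hb) (identric_pos hb ha)
    (mul_left_cancel₀ (sub_ne_zero.2 hab.symm) ?_)
  rw [mul_log_identric ha hb, integral_symm, ← mul_log_identric hb ha]
  ring

section HermiteHadamard

variable {f : ℝ → ℝ} {a b : ℝ}

theorem ConvexOn.mul_map_midpoint_le_integral (hf : ConvexOn ℝ (Icc a b) f)
    (hfi : IntervalIntegrable f volume a b) (hab : a ≤ b) :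
    (b - a) * f ((a + b) / 2) ≤ ∫ t in a..b, f t := by
  have hreflect : ∀ t ∈ Icc a b, a + b - t ∈ Icc a b := fun t ht =>
    ⟨by linarith [ht.2], by linarith [ht.1]⟩
  have hfi' : IntervalIntegrable (fun t => f (a + b - t)) volume a b := by
    simpa using (hfi.comp_sub_left (a + b)).symm
  have hmid : ∀ t ∈ Icc a b, 2 * f ((a + b) / 2) ≤ f t + f (a + b - t) := by
    intro t ht
    have h := hf.2 ht (hreflect t ht) one_half_pos.le one_half_pos.le (add_halves 1)
    simp only [smul_eq_mul] at h
    rw [show 1 / 2 * t + 1 / 2 * (a + b - t) = (a + b) / 2 by ring] at h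
    linarith
  have := integral_mono_on hab intervalIntegrable_const (hfi.add hfi') hmid
  rw [integral_const, integral_add hfi hfi', integral_comp_sub_left, add_sub_cancel_right,
    add_sub_cancel_left, smul_eq_mul] at this
  linarith

theorem ConvexOn.integral_le_mul_average (hf : ConvexOn ℝ (Icc a b) f)
    (hfi : IntervalIntegrable f volume a b) (hab : a ≤ b) :
    ∫ t in a..b, f t ≤ (b - a) * ((f a + f b) / 2) := by
  rcases hab.eq_or_lt with rfl | hab
  · simp
  have hba : 0 < b - a := sub_pos.2 hab
  set chord : ℝ → ℝ := fun t => ((b - t) * f a + (t - a) * f b) / (b - a)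
  have hchord : ∀ t ∈ Icc a b, f t ≤ chord t := by
    intro t ht
    have h := hf.2 (left_mem_Icc.2 hab.le) (right_mem_Icc.2 hab.le)
      (div_nonneg (sub_nonneg.2 ht.2) hba.le) (div_nonneg (sub_nonneg.2 ht.1) hba.le)
      (by field_simp; ring)
    simp only [smul_eq_mul] at h
    rw [show (b - t) / (b - a) * a + (t - a) / (b - a) * b = t by field_simp; ring] at h
    simpa only [chord, add_div, div_mul_eq_mul_div] using h
  have := integral_mono_on hab.le hfi
    ((by fun_prop : Continuous chord).intervalIntegrable a b) hchord
  have hint : ∫ t in a..b, chord t = (b - a) * ((f a + f b) / 2) := by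
    have h₁ : ∫ t in a..b, (b - t) = (b - a) ^ 2 / 2 := by
      simp [integral_comp_sub_left (fun t => t) b]
    have h₂ : ∫ t in a..b, (t - a) = (b - a) ^ 2 / 2 := by
      simp [integral_comp_sub_right (fun t => t) a]
    rw [integral_div,
      integral_add ((by fun_prop : Continuous fun t => (b - t) * f a).intervalIntegrable _ _)
        ((by fun_prop : Continuous fun t => (t - a) * f b).intervalIntegrable _ _),
      integral_mul_const, integral_mul_const, h₁, h₂]
    field_simp
  linarith

end HermiteHadamard

noncomputable def kyFanLog (t : ℝ) : ℝ := log (1 - t) - log t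

theorem hasDerivAt_kyFanLog {t : ℝ} (h0 : t ≠ 0) (h1 : 1 - t ≠ 0) :
    HasDerivAt kyFanLog (-(1 - t)⁻¹ - t⁻¹) t := by
  have := ((hasDerivAt_id t).const_sub 1).log h1
  exact (this.sub (hasDerivAt_log h0)).congr_deriv (by simp [div_eq_mul_inv])

theorem convexOn_kyFanLog : ConvexOn ℝ (Ioc 0 (1 / 2)) kyFanLog := by
  have hne {t : ℝ} (ht : t ∈ Ioc (0 : ℝ) (1 / 2)) : t ≠ 0 ∧ 1 - t ≠ 0 :=
    ⟨ht.1.ne', by linarith [ht.2]⟩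
  refine convexOn_of_hasDerivWithinAt2_nonneg (convex_Ioc 0 (1 / 2))
    (f' := fun t => -(1 - t)⁻¹ - t⁻¹) (f'' := fun t => (t ^ 2)⁻¹ - ((1 - t) ^ 2)⁻¹)
    (fun t ht => ?_) (fun t ht => ?_) (fun t ht => ?_) (fun t ht => ?_)
  · exact (hasDerivAt_kyFanLog (hne ht).1 (hne ht).2).continuousAt.continuousWithinAt
  · rw [interior_Ioc] at ht
    obtain ⟨h0, h1⟩ := hne (Ioo_subset_Ioc_self ht)
    exact (hasDerivAt_kyFanLog h0 h1).hasDerivWithinAt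
  · rw [interior_Ioc] at ht
    obtain ⟨h0, h1⟩ := hne (Ioo_subset_Ioc_self ht)
    have h₁ := (((hasDerivAt_id t).const_sub 1).inv h1).neg
    have h₂ := (hasDerivAt_id t).inv h0
    exact (h₁.sub h₂).hasDerivWithinAt.congr_deriv (by simp only [neg_neg, id_eq, one_div]; ring)
  · rw [interior_Ioc] at ht
    have : t ^ 2 ≤ (1 - t) ^ 2 := by nlinarith [ht.1, ht.2]
    exact sub_nonneg.2 (inv_anti₀ (pow_pos ht.1 2) this)

theorem intervalIntegrable_log_one_sub (a b : ℝ) :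
    IntervalIntegrable (fun t => log (1 - t)) volume a b := by
  simpa only [sub_sub_cancel] using
    (intervalIntegrable_log' (a := 1 - a) (b := 1 - b)).comp_sub_left 1

theorem intervalIntegrable_kyFanLog (a b : ℝ) : IntervalIntegrable kyFanLog volume a b :=
  (intervalIntegrable_log_one_sub a b).sub intervalIntegrable_log'

theorem exp_kyFanLog {t : ℝ} (ht : t ∈ Ioo (0 : ℝ) 1) : exp (kyFanLog t) = (1 - t) / t := by
  rw [kyFanLog, exp_sub, exp_log (sub_pos.2 ht.2), exp_log ht.1]

noncomputable def identricRatio (a b : ℝ) : ℝ := identric (1 - a) (1 - b) / identric a b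

section IdentricRatio

variable {a b : ℝ}

theorem identricRatio_pos (ha : a ∈ Ioo (0 : ℝ) 1) (hb : b ∈ Ioo (0 : ℝ) 1) :
    0 < identricRatio a b :=
  div_pos (identric_pos (sub_pos.2 ha.2) (sub_pos.2 hb.2)) (identric_pos ha.1 hb.1)

theorem identricRatio_comm (ha : a ∈ Ioo (0 : ℝ) 1) (hb : b ∈ Ioo (0 : ℝ) 1) :
    identricRatio a b = identricRatio b a := by
  rw [identricRatio, identricRatio, identric_comm ha.1 hb.1,
    identric_comm (sub_pos.2 ha.2) (sub_pos.2 hb.2)]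

theorem log_identricRatio_self (ha : a ∈ Ioo (0 : ℝ) 1) :
    log (identricRatio a a) = kyFanLog a := by
  rw [identricRatio, identric_self, identric_self, log_div (sub_pos.2 ha.2).ne' ha.1.ne', kyFanLog]

theorem mul_log_identricRatio (ha : a ∈ Ioo (0 : ℝ) 1) (hb : b ∈ Ioo (0 : ℝ) 1) :
    (b - a) * log (identricRatio a b) = ∫ t in a..b, kyFanLog t := by
  have hlog_one_sub : (b - a) * log (identric (1 - a) (1 - b)) = ∫ t in a..b, log (1 - t) := by
    rw [integral_comp_sub_left, integral_symm,
      ← mul_log_identric (sub_pos.2 ha.2) (sub_pos.2 hb.2)]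
    ring
  rw [identricRatio, log_div (identric_pos (sub_pos.2 ha.2) (sub_pos.2 hb.2)).ne'
    (identric_pos ha.1 hb.1).ne', mul_sub, hlog_one_sub, mul_log_identric ha.1 hb.1,
    ← integral_sub (intervalIntegrable_log_one_sub a b) intervalIntegrable_log']
  rfl

theorem log_identricRatio_mem_Icc (ha : a ∈ Ioc (0 : ℝ) (1 / 2)) (hb : b ∈ Ioc (0 : ℝ) (1 / 2)) :
    log (identricRatio a b) ∈ Icc (kyFanLog ((a + b) / 2)) ((kyFanLog a + kyFanLog b) / 2) := by
  have ha' := Ioc_subset_Ioo_right one_half_lt_one ha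
  have hb' := Ioc_subset_Ioo_right one_half_lt_one hb
  wlog hab : a ≤ b generalizing a b
  · rw [identricRatio_comm ha' hb', add_comm, add_comm (kyFanLog a)]
    exact this hb ha hb' ha' (le_of_not_ge hab)
  rcases hab.eq_or_lt with rfl | hab
  · simp [add_self_div_two, log_identricRatio_self ha']
  have hconvex := convexOn_kyFanLog.subset (Icc_subset_Ioc ha.1 hb.2) (convex_Icc a b)
  constructor <;> refine le_of_mul_le_mul_left ?_ (sub_pos.2 hab) <;>
    rw [mul_log_identricRatio ha' hb']
  · exact hconvex.mul_map_midpoint_le_integral (intervalIntegrable_kyFanLog a b) hab.le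
  · exact hconvex.integral_le_mul_average (intervalIntegrable_kyFanLog a b) hab.le

end IdentricRatio

structure IsWeightFunction {ι κ : Type*} [Fintype ι] [Fintype κ]
    (μ : ι → ℝ) (lam : κ → ℝ) (ω : ι → κ → ℝ) : Prop where
  nonneg : ∀ i j, 0 ≤ ω i j
  sum_fst : ∀ j, ∑ i, ω i j * μ i = 1
  sum_snd : ∀ i, ∑ j, ω i j * lam j = 1

section WeightedMeans

variable {ι κ : Type*} [Fintype ι] [Fintype κ] {μ : ι → ℝ} {lam : κ → ℝ} {ω ω₁ ω₂ : ι → κ → ℝ}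
  {x : κ → ℝ}

theorem IsWeightFunction.sum_mul_sum (hω : IsWeightFunction μ lam ω) (y : κ → ℝ) :
    ∑ i, μ i * ∑ j, ω i j * lam j * y j = ∑ j, lam j * y j := by
  calc ∑ i, μ i * ∑ j, ω i j * lam j * y j = ∑ j, (∑ i, ω i j * μ i) * (lam j * y j) := by
        simp only [mul_sum, sum_mul]
        rw [sum_comm]
        exact sum_congr rfl fun _ _ => sum_congr rfl fun _ _ => by ring
    _ = ∑ j, lam j * y j := by simp only [hω.sum_fst, one_mul]

theorem sum_mul_mem_Ioc {w : κ → ℝ} (hw0 : ∀ j, 0 ≤ w j) (hw1 : ∑ j, w j = 1)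
    (hx : ∀ j, x j ∈ Ioc (0 : ℝ) (1 / 2)) : ∑ j, w j * x j ∈ Ioc (0 : ℝ) (1 / 2) := by
  simpa only [smul_eq_mul] using
    (convex_Ioc (0 : ℝ) (1 / 2)).sum_mem (fun j _ => hw0 j) hw1 (fun j _ => hx j)

theorem kyFanLog_sum_mul_le {w : κ → ℝ} (hw0 : ∀ j, 0 ≤ w j) (hw1 : ∑ j, w j = 1)
    (hx : ∀ j, x j ∈ Ioc (0 : ℝ) (1 / 2)) :
    kyFanLog (∑ j, w j * x j) ≤ ∑ j, w j * kyFanLog (x j) := by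
  simpa only [smul_eq_mul] using
    convexOn_kyFanLog.map_sum_le (fun j _ => hw0 j) hw1 (fun j _ => hx j)

theorem IsWeightFunction.sum_mul_mem_Ioc (hω : IsWeightFunction μ lam ω) (hlam0 : ∀ j, 0 ≤ lam j)
    (hx : ∀ j, x j ∈ Ioc (0 : ℝ) (1 / 2)) (i : ι) :
    ∑ j, ω i j * lam j * x j ∈ Ioc (0 : ℝ) (1 / 2) :=
  _root_.sum_mul_mem_Ioc (fun j => mul_nonneg (hω.nonneg i j) (hlam0 j)) (hω.sum_snd i) hx

theorem IsWeightFunction.kyFanLog_sum_mul_le (hω : IsWeightFunction μ lam ω)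
    (hlam0 : ∀ j, 0 ≤ lam j) (hx : ∀ j, x j ∈ Ioc (0 : ℝ) (1 / 2)) (i : ι) :
    kyFanLog (∑ j, ω i j * lam j * x j) ≤ ∑ j, ω i j * lam j * kyFanLog (x j) :=
  _root_.kyFanLog_sum_mul_le (fun j => mul_nonneg (hω.nonneg i j) (hlam0 j)) (hω.sum_snd i) hx

theorem kyFanLog_le_sum_mul_log_identricRatio (hμ0 : ∀ i, 0 ≤ μ i) (hμ1 : ∑ i, μ i = 1)
    (hlam0 : ∀ j, 0 ≤ lam j) (hω₁ : IsWeightFunction μ lam ω₁) (hω₂ : IsWeightFunction μ lam ω₂)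
    (hx : ∀ j, x j ∈ Ioc (0 : ℝ) (1 / 2)) :
    kyFanLog (∑ j, lam j * x j) ≤
      ∑ i, μ i * log (identricRatio (∑ j, ω₁ i j * lam j * x j) (∑ j, ω₂ i j * lam j * x j)) := by
  have ha := hω₁.sum_mul_mem_Ioc hlam0 hx
  have hb := hω₂.sum_mul_mem_Ioc hlam0 hx
  have hmid : ∀ i,
      (∑ j, ω₁ i j * lam j * x j + ∑ j, ω₂ i j * lam j * x j) / 2 ∈ Ioc (0 : ℝ) (1 / 2) :=
    fun i => ⟨by linarith [(ha i).1, (hb i).1], by linarith [(ha i).2, (hb i).2]⟩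
  have hmean : ∑ i, μ i * ((∑ j, ω₁ i j * lam j * x j + ∑ j, ω₂ i j * lam j * x j) / 2) =
      ∑ j, lam j * x j := by
    simp only [mul_div_assoc', mul_add, ← sum_div, sum_add_distrib, hω₁.sum_mul_sum,
      hω₂.sum_mul_sum, add_self_div_two]
  calc kyFanLog (∑ j, lam j * x j)
      ≤ ∑ i, μ i * kyFanLog ((∑ j, ω₁ i j * lam j * x j + ∑ j, ω₂ i j * lam j * x j) / 2) :=
        hmean ▸ kyFanLog_sum_mul_le hμ0 hμ1 hmid
    _ ≤ _ := sum_le_sum fun i _ =>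
        mul_le_mul_of_nonneg_left (log_identricRatio_mem_Icc (ha i) (hb i)).1 (hμ0 i)

theorem sum_mul_log_identricRatio_le_sum_mul_kyFanLog (hμ0 : ∀ i, 0 ≤ μ i)
    (hlam0 : ∀ j, 0 ≤ lam j) (hω₁ : IsWeightFunction μ lam ω₁) (hω₂ : IsWeightFunction μ lam ω₂)
    (hx : ∀ j, x j ∈ Ioc (0 : ℝ) (1 / 2)) :
    ∑ i, μ i * log (identricRatio (∑ j, ω₁ i j * lam j * x j) (∑ j, ω₂ i j * lam j * x j)) ≤
      ∑ j, lam j * kyFanLog (x j) := by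
  have ha := hω₁.sum_mul_mem_Ioc hlam0 hx
  have hb := hω₂.sum_mul_mem_Ioc hlam0 hx
  calc _ ≤ ∑ i, μ i * ((∑ j, ω₁ i j * lam j * kyFanLog (x j) +
          ∑ j, ω₂ i j * lam j * kyFanLog (x j)) / 2) :=
        sum_le_sum fun i _ => mul_le_mul_of_nonneg_left
          ((log_identricRatio_mem_Icc (ha i) (hb i)).2.trans (by
            linarith [hω₁.kyFanLog_sum_mul_le hlam0 hx i, hω₂.kyFanLog_sum_mul_le hlam0 hx i]))
          (hμ0 i)
    _ = ∑ j, lam j * kyFanLog (x j) := by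
      simp only [mul_div_assoc', mul_add, ← sum_div, sum_add_distrib, hω₁.sum_mul_sum,
        hω₂.sum_mul_sum, add_self_div_two]

end WeightedMeans

theorem prod_rpow_eq_exp_sum_mul_log {ι : Type*} [Fintype ι] {r : ι → ℝ} (hr : ∀ i, 0 < r i)
    (w : ι → ℝ) : ∏ i, r i ^ w i = exp (∑ i, w i * log (r i)) := by
  rw [exp_sum]
  exact prod_congr rfl fun i _ => by rw [rpow_def_of_pos (hr i), mul_comm]

/-- Refinement of Ky Fan's inequality `Aₙ'/Aₙ ≤ Gₙ'/Gₙ` via two weight functions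
and the identric mean. -/
theorem ky_fan_refinement_identric
    {m n : ℕ} (μ : Fin m → ℝ) (lam : Fin n → ℝ)
    (hμ0 : ∀ i, 0 ≤ μ i) (hμ1 : ∑ i, μ i = 1)
    (hlam0 : ∀ j, 0 ≤ lam j) (hlam1 : ∑ j, lam j = 1)
    (ω₁ ω₂ : Fin m → Fin n → ℝ)
    (hω₁0 : ∀ i j, 0 ≤ ω₁ i j) (hω₁μ : ∀ j, ∑ i, ω₁ i j * μ i = 1)
    (hω₁lam : ∀ i, ∑ j, ω₁ i j * lam j = 1)
    (hω₂0 : ∀ i j, 0 ≤ ω₂ i j) (hω₂μ : ∀ j, ∑ i, ω₂ i j * μ i = 1)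
    (hω₂lam : ∀ i, ∑ j, ω₂ i j * lam j = 1)
    (x : Fin n → ℝ) (hx0 : ∀ j, 0 < x j) (hxhalf : ∀ j, x j ≤ 1 / 2) :
    (∑ j, lam j * (1 - x j)) / (∑ j, lam j * x j) ≤
        (∏ i, (identric (∑ j, ω₁ i j * lam j * (1 - x j)) (∑ j, ω₂ i j * lam j * (1 - x j)) /
            identric (∑ j, ω₁ i j * lam j * x j) (∑ j, ω₂ i j * lam j * x j)) ^ μ i) ∧
      (∏ i, (identric (∑ j, ω₁ i j * lam j * (1 - x j)) (∑ j, ω₂ i j * lam j * (1 - x j)) /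
            identric (∑ j, ω₁ i j * lam j * x j) (∑ j, ω₂ i j * lam j * x j)) ^ μ i) ≤
        (∏ j, (1 - x j) ^ lam j) / (∏ j, x j ^ lam j) := by
  have hx : ∀ j, x j ∈ Ioc (0 : ℝ) (1 / 2) := fun j => ⟨hx0 j, hxhalf j⟩
  have hIoo : Ioc (0 : ℝ) (1 / 2) ⊆ Ioo 0 1 := Ioc_subset_Ioo_right one_half_lt_one
  have hω₁ : IsWeightFunction μ lam ω₁ := ⟨hω₁0, hω₁μ, hω₁lam⟩
  have hω₂ : IsWeightFunction μ lam ω₂ := ⟨hω₂0, hω₂μ, hω₂lam⟩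
  have hlower := kyFanLog_le_sum_mul_log_identricRatio hμ0 hμ1 hlam0 hω₁ hω₂ hx
  have hupper := sum_mul_log_identricRatio_le_sum_mul_kyFanLog hμ0 hlam0 hω₁ hω₂ hx
  have hprod := prod_rpow_eq_exp_sum_mul_log (r := fun i =>
      identricRatio (∑ j, ω₁ i j * lam j * x j) (∑ j, ω₂ i j * lam j * x j))
    (fun i => identricRatio_pos (hIoo (hω₁.sum_mul_mem_Ioc hlam0 hx i))
      (hIoo (hω₂.sum_mul_mem_Ioc hlam0 hx i))) μ
  have hgeom : (∏ j, (1 - x j) ^ lam j) / (∏ j, x j ^ lam j) =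
      exp (∑ j, lam j * kyFanLog (x j)) := by
    rw [prod_rpow_eq_exp_sum_mul_log fun j => sub_pos.2 (hIoo (hx j)).2,
      prod_rpow_eq_exp_sum_mul_log hx0, ← exp_sub, ← sum_sub_distrib]
    simp only [kyFanLog, mul_sub]
  simp only [mul_one_sub, sum_sub_distrib, hlam1, hω₁lam, hω₂lam]
  rw [← exp_kyFanLog (hIoo (sum_mul_mem_Ioc hlam0 hlam1 hx)), hgeom]
  exact ⟨(exp_le_exp.2 hlower).trans_eq hprod.symm, hprod.trans_le (exp_le_exp.2 hupper)⟩
end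

section
/- Let (X,𝒜,ν) be a measure space, p ≥ 1, f₁,…,fₙ ∈ L^p(ν), and B = [b_{ij}], C = [c_{ij}] two n×n doubly stochastic matrices. Then ‖(f₁+⋯+fₙ)/n‖_p^p ≤ (1/n)∑_{i=1}^n ‖L_p^p(∑_{j=1}^n b_{ij}|fⱼ|, ∑_{j=1}^n c_{ij}|fⱼ|)‖_1 ≤ (‖f₁‖_p^p+⋯+‖fₙ‖_p^p)/n. -/
/-!
Since `L_p^p(a, b) = ∫₀¹ ((1 - t) a + t b)^p dt`, the Hermite–Hadamard inequality for the convex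
function `x ↦ x^p` sandwiches it: `((a + b) / 2)^p ≤ L_p^p(a, b) ≤ (a^p + b^p) / 2`.
Apply this with `a = (B|f|)ᵢ`, `b = (C|f|)ᵢ` pointwise. On the left, averaging over `i` and using
Jensen's inequality once more, the column sums of `B` and `C` turn `∑ᵢ (aᵢ + bᵢ) / 2` into
`∑ⱼ |fⱼ|`. On the right, Jensen along the rows of `B` and `C` gives `aᵢ^p ≤ (B|f|^p)ᵢ`, and the
column sums again collapse `∑ᵢ` into `∑ⱼ |fⱼ|^p`. Integrating gives the two inequalities.
-/

open Finset MeasureTheory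

/-- The `p`-th power of the `p`-logarithmic mean:
`L_p^p(a,b) = (b^{p+1} - a^{p+1})/((p+1)(b-a))` for `a ≠ b`, and `a^p` for `a = b`. -/
noncomputable def LpPowP (p a b : ℝ) : ℝ :=
  if a = b then a ^ p else (b ^ (p + 1) - a ^ (p + 1)) / ((p + 1) * (b - a))

section HermiteHadamard

open intervalIntegral

variable {s : Set ℝ} {φ : ℝ → ℝ} {a b : ℝ}

theorem ConvexOn.map_add_div_two_le_integral (hφ : ConvexOn ℝ s φ) (hcont : Continuous φ)
    (ha : a ∈ s) (hb : b ∈ s) :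
    φ ((a + b) / 2) ≤ ∫ t in (0:ℝ)..1, φ ((1 - t) * a + t * b) := by
  have hseg : ∀ u ∈ s, ∀ v ∈ s, ∀ t ∈ Set.Icc (0:ℝ) 1, (1 - t) * u + t * v ∈ s :=
    fun u hu v hv t ht => hφ.1 hu hv (by linarith [ht.2]) ht.1 (by ring)
  have hint : ∀ u v : ℝ, IntervalIntegrable (fun t => φ ((1 - t) * u + t * v)) volume 0 1 :=
    fun u v => (by fun_prop : Continuous fun t => φ ((1 - t) * u + t * v)).intervalIntegrable 0 1
  have hswap : ∫ t in (0:ℝ)..1, φ ((1 - t) * b + t * a) =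
      ∫ t in (0:ℝ)..1, φ ((1 - t) * a + t * b) := by
    have h := integral_comp_sub_left (a := 0) (b := 1) (fun t => φ ((1 - t) * a + t * b)) 1
    rw [sub_zero, sub_self] at h
    rw [← h]
    exact integral_congr fun t _ => congrArg φ (by ring)
  have hmid : ∀ t ∈ Set.Icc (0:ℝ) 1,
      2 * φ ((a + b) / 2) ≤ φ ((1 - t) * a + t * b) + φ ((1 - t) * b + t * a) := by
    intro t ht
    have h := hφ.2 (hseg a ha b hb t ht) (hseg b hb a ha t ht) (by norm_num : (0:ℝ) ≤ 1 / 2)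
      (by norm_num : (0:ℝ) ≤ 1 / 2) (by norm_num)
    have hmidpoint :
        1 / 2 * ((1 - t) * a + t * b) + 1 / 2 * ((1 - t) * b + t * a) = (a + b) / 2 := by
      ring
    simp only [smul_eq_mul, hmidpoint] at h
    linarith
  have h := integral_mono_on zero_le_one intervalIntegrable_const ((hint a b).add (hint b a)) hmid
  rw [intervalIntegral.integral_const, integral_add (hint a b) (hint b a), hswap] at h
  simp only [sub_zero, one_smul] at h
  linarith

theorem ConvexOn.integral_le_add_div_two (hφ : ConvexOn ℝ s φ) (hcont : Continuous φ)
    (ha : a ∈ s) (hb : b ∈ s) :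
    ∫ t in (0:ℝ)..1, φ ((1 - t) * a + t * b) ≤ (φ a + φ b) / 2 := by
  have hchord : ∀ t ∈ Set.Icc (0:ℝ) 1, φ ((1 - t) * a + t * b) ≤ (1 - t) * φ a + t * φ b :=
    fun t ht => hφ.2 ha hb (by linarith [ht.2]) ht.1 (by ring)
  calc ∫ t in (0:ℝ)..1, φ ((1 - t) * a + t * b)
      ≤ ∫ t in (0:ℝ)..1, ((1 - t) * φ a + t * φ b) :=
        integral_mono_on zero_le_one (Continuous.intervalIntegrable (by fun_prop) 0 1)
          (Continuous.intervalIntegrable (by fun_prop) 0 1) hchord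
    _ = (φ a + φ b) / 2 := by
        rw [integral_add (Continuous.intervalIntegrable (by fun_prop) 0 1)
          (Continuous.intervalIntegrable (by fun_prop) 0 1), intervalIntegral.integral_mul_const,
          intervalIntegral.integral_mul_const,
          integral_sub intervalIntegrable_const intervalIntegrable_id, integral_id]
        norm_num
        ring

end HermiteHadamard

section LogarithmicMean

variable {p a b : ℝ}

theorem lpPowP_eq_integral (hp : -1 < p) :
    LpPowP p a b = ∫ t in (0:ℝ)..1, ((1 - t) * a + t * b) ^ p := by
  rcases eq_or_ne a b with rfl | hab
  · have h : ∀ t : ℝ, (1 - t) * a + t * a = a := fun t => by ring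
    simp [LpPowP, h]
  · have h : ∀ t : ℝ, (1 - t) * a + t * b = (b - a) * t + a := fun t => by ring
    have hba : b - a ≠ 0 := sub_ne_zero.2 hab.symm
    rw [LpPowP, if_neg hab]
    simp only [h]
    rw [intervalIntegral.integral_comp_mul_add (fun u => u ^ p) hba, integral_rpow (Or.inl hp)]
    have hp1 : p + 1 ≠ 0 := by linarith
    simp only [smul_eq_mul, mul_zero, mul_one, zero_add, sub_add_cancel]
    field_simp

theorem rpow_add_div_two_le_lpPowP (hp : 1 ≤ p) (ha : 0 ≤ a) (hb : 0 ≤ b) :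
    ((a + b) / 2) ^ p ≤ LpPowP p a b := by
  rw [lpPowP_eq_integral (by linarith)]
  exact (convexOn_rpow hp).map_add_div_two_le_integral
    (Real.continuous_rpow_const (by linarith)) ha hb

theorem lpPowP_le_rpow_add_rpow_div_two (hp : 1 ≤ p) (ha : 0 ≤ a) (hb : 0 ≤ b) :
    LpPowP p a b ≤ (a ^ p + b ^ p) / 2 := by
  rw [lpPowP_eq_integral (by linarith)]
  exact (convexOn_rpow hp).integral_le_add_div_two
    (Real.continuous_rpow_const (by linarith)) ha hb

theorem lpPowP_nonneg (hp : 1 ≤ p) (ha : 0 ≤ a) (hb : 0 ≤ b) : 0 ≤ LpPowP p a b :=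
  (Real.rpow_nonneg (by positivity) p).trans (rpow_add_div_two_le_lpPowP hp ha hb)

theorem measurable_lpPowP (p : ℝ) : Measurable fun q : ℝ × ℝ => LpPowP p q.1 q.2 := by
  unfold LpPowP
  exact Measurable.ite (measurableSet_eq_fun measurable_fst measurable_snd) (by fun_prop)
    (by fun_prop)

end LogarithmicMean

theorem Finset.sum_sum_mul_eq_sum_of_sum_eq_one {ι κ R : Type*} [Fintype ι] [Fintype κ]
    [NonAssocSemiring R] {w : ι → κ → R} (hw : ∀ j, ∑ i, w i j = 1) (z : κ → R) :
    ∑ i, ∑ j, w i j * z j = ∑ j, z j := by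
  rw [Finset.sum_comm]
  simp [← Finset.sum_mul, hw]

section DoublyStochastic

variable {ι : Type*} [Fintype ι] {p : ℝ} {b c : ι → ι → ℝ} {y : ι → ℝ}

theorem lpPowP_sum_mul_nonneg (hp : 1 ≤ p) (hy : ∀ j, 0 ≤ y j) (hb0 : ∀ i j, 0 ≤ b i j)
    (hc0 : ∀ i j, 0 ≤ c i j) (i : ι) : 0 ≤ LpPowP p (∑ j, b i j * y j) (∑ j, c i j * y j) :=
  lpPowP_nonneg hp (sum_nonneg fun j _ => mul_nonneg (hb0 i j) (hy j))
    (sum_nonneg fun j _ => mul_nonneg (hc0 i j) (hy j))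

theorem rpow_sum_div_card_le_inv_card_mul_sum_lpPowP (hp : 1 ≤ p) (hy : ∀ j, 0 ≤ y j)
    (hb0 : ∀ i j, 0 ≤ b i j) (hbcol : ∀ j, ∑ i, b i j = 1)
    (hc0 : ∀ i j, 0 ≤ c i j) (hccol : ∀ j, ∑ i, c i j = 1) :
    ((∑ j, y j) / Fintype.card ι) ^ p ≤
      (Fintype.card ι : ℝ)⁻¹ * ∑ i, LpPowP p (∑ j, b i j * y j) (∑ j, c i j * y j) := by
  rcases isEmpty_or_nonempty ι with hι | hι
  · simp [Real.zero_rpow (by linarith : p ≠ 0)]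
  set A := fun i => ∑ j, b i j * y j
  set C := fun i => ∑ j, c i j * y j
  have hA : ∀ i, 0 ≤ A i := fun i => sum_nonneg fun j _ => mul_nonneg (hb0 i j) (hy j)
  have hC : ∀ i, 0 ≤ C i := fun i => sum_nonneg fun j _ => mul_nonneg (hc0 i j) (hy j)
  have hsum : ∑ j, y j = ∑ i, (A i + C i) / 2 := by
    rw [← sum_div, sum_add_distrib, sum_sum_mul_eq_sum_of_sum_eq_one hbcol,
      sum_sum_mul_eq_sum_of_sum_eq_one hccol]
    ring
  have hweights : ∑ _i : ι, (Fintype.card ι : ℝ)⁻¹ = 1 := by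
    simp [Fintype.card_ne_zero]
  calc ((∑ j, y j) / Fintype.card ι) ^ p
      = (∑ i, (Fintype.card ι : ℝ)⁻¹ * ((A i + C i) / 2)) ^ p := by
        rw [hsum, div_eq_inv_mul, mul_sum]
    _ ≤ ∑ i, (Fintype.card ι : ℝ)⁻¹ * ((A i + C i) / 2) ^ p :=
        Real.rpow_arith_mean_le_arith_mean_rpow univ _ _ (fun _ _ => by positivity) hweights
          (fun i _ => by linarith [hA i, hC i]) hp
    _ ≤ ∑ i, (Fintype.card ι : ℝ)⁻¹ * LpPowP p (A i) (C i) := by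
        gcongr with i
        exact rpow_add_div_two_le_lpPowP hp (hA i) (hC i)
    _ = _ := by rw [mul_sum]

theorem sum_lpPowP_le_sum_rpow (hp : 1 ≤ p) (hy : ∀ j, 0 ≤ y j)
    (hb0 : ∀ i j, 0 ≤ b i j) (hbrow : ∀ i, ∑ j, b i j = 1) (hbcol : ∀ j, ∑ i, b i j = 1)
    (hc0 : ∀ i j, 0 ≤ c i j) (hcrow : ∀ i, ∑ j, c i j = 1) (hccol : ∀ j, ∑ i, c i j = 1) :
    ∑ i, LpPowP p (∑ j, b i j * y j) (∑ j, c i j * y j) ≤ ∑ j, y j ^ p := by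
  have jensen : ∀ w : ι → ι → ℝ, (∀ i j, 0 ≤ w i j) → (∀ i, ∑ j, w i j = 1) →
      ∀ i, (∑ j, w i j * y j) ^ p ≤ ∑ j, w i j * y j ^ p := fun w hw0 hwrow i =>
    Real.rpow_arith_mean_le_arith_mean_rpow univ (w i) y (fun j _ => hw0 i j) (hwrow i)
      (fun j _ => hy j) hp
  have hnonneg : ∀ w : ι → ι → ℝ, (∀ i j, 0 ≤ w i j) → ∀ i, 0 ≤ ∑ j, w i j * y j :=
    fun w hw0 i => sum_nonneg fun j _ => mul_nonneg (hw0 i j) (hy j)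
  calc ∑ i, LpPowP p (∑ j, b i j * y j) (∑ j, c i j * y j)
      ≤ ∑ i, ((∑ j, b i j * y j) ^ p + (∑ j, c i j * y j) ^ p) / 2 :=
        sum_le_sum fun i _ =>
          lpPowP_le_rpow_add_rpow_div_two hp (hnonneg b hb0 i) (hnonneg c hc0 i)
    _ ≤ ∑ i, ((∑ j, b i j * y j ^ p) + ∑ j, c i j * y j ^ p) / 2 := by
        gcongr with i
        · exact jensen b hb0 hbrow i
        · exact jensen c hc0 hcrow i
    _ = ∑ j, y j ^ p := by
        rw [← sum_div, sum_add_distrib, sum_sum_mul_eq_sum_of_sum_eq_one hbcol,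
          sum_sum_mul_eq_sum_of_sum_eq_one hccol]
        ring

end DoublyStochastic

theorem MeasureTheory.MemLp.integrable_abs_rpow {α : Type*} [MeasurableSpace α] {μ : Measure α}
    {f : α → ℝ} {p : ℝ} (hf : MemLp f (ENNReal.ofReal p) μ) (hp : 0 < p) :
    Integrable (fun x => |f x| ^ p) μ := by
  simpa [ENNReal.toReal_ofReal hp.le, Real.norm_eq_abs] using
    hf.integrable_norm_rpow (by simpa using hp) ENNReal.ofReal_ne_top

section Integral

variable {ι X : Type*} [Fintype ι] [MeasurableSpace X] {ν : Measure X} {p : ℝ}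
  {f : ι → X → ℝ} {b c : ι → ι → ℝ}

theorem integrable_lpPowP_sum_mul_abs (hp : 1 ≤ p) (hf : ∀ j, MemLp (f j) (ENNReal.ofReal p) ν)
    (hb0 : ∀ i j, 0 ≤ b i j) (hbrow : ∀ i, ∑ j, b i j = 1) (hbcol : ∀ j, ∑ i, b i j = 1)
    (hc0 : ∀ i j, 0 ≤ c i j) (hcrow : ∀ i, ∑ j, c i j = 1) (hccol : ∀ j, ∑ i, c i j = 1)
    (i : ι) : Integrable (fun x => LpPowP p (∑ j, b i j * |f j x|) (∑ j, c i j * |f j x|)) ν := by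
  have hfm : ∀ j, AEMeasurable (f j) ν := fun j => (hf j).aestronglyMeasurable.aemeasurable
  have hmeas := (measurable_lpPowP p).comp_aemeasurable
    (by fun_prop : AEMeasurable (fun x => (∑ j, b i j * |f j x|, ∑ j, c i j * |f j x|)) ν)
  refine (integrable_finsetSum univ fun j _ => (hf j).integrable_abs_rpow
    (by linarith)).mono' hmeas.aestronglyMeasurable (ae_of_all _ fun x => ?_)
  have hy : ∀ j, 0 ≤ |f j x| := fun j => abs_nonneg _
  rw [Real.norm_eq_abs, abs_of_nonneg (lpPowP_sum_mul_nonneg hp hy hb0 hc0 i)]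
  exact (single_le_sum (fun i _ => lpPowP_sum_mul_nonneg hp hy hb0 hc0 i) (mem_univ i)).trans
    (sum_lpPowP_le_sum_rpow hp hy hb0 hbrow hbcol hc0 hcrow hccol)

theorem integral_rpow_abs_sum_div_card_le (hp : 1 ≤ p)
    (hf : ∀ j, MemLp (f j) (ENNReal.ofReal p) ν)
    (hb0 : ∀ i j, 0 ≤ b i j) (hbrow : ∀ i, ∑ j, b i j = 1) (hbcol : ∀ j, ∑ i, b i j = 1)
    (hc0 : ∀ i j, 0 ≤ c i j) (hcrow : ∀ i, ∑ j, c i j = 1) (hccol : ∀ j, ∑ i, c i j = 1) :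
    ∫ x, |(∑ j, f j x) / Fintype.card ι| ^ p ∂ν ≤ (Fintype.card ι : ℝ)⁻¹ *
      ∑ i, ∫ x, LpPowP p (∑ j, b i j * |f j x|) (∑ j, c i j * |f j x|) ∂ν := by
  have hG := integrable_lpPowP_sum_mul_abs hp hf hb0 hbrow hbcol hc0 hcrow hccol
  rw [← integral_finsetSum _ fun i _ => hG i, ← integral_const_mul]
  refine integral_mono_of_nonneg (ae_of_all _ fun x => by positivity)
    ((integrable_finsetSum _ fun i _ => hG i).const_mul _) (ae_of_all _ fun x => ?_)
  calc |(∑ j, f j x) / Fintype.card ι| ^ p ≤ ((∑ j, |f j x|) / Fintype.card ι) ^ p := by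
        gcongr
        rw [abs_div, Nat.abs_cast]
        gcongr
        exact abs_sum_le_sum_abs _ _
    _ ≤ _ := rpow_sum_div_card_le_inv_card_mul_sum_lpPowP hp (fun j => abs_nonneg _)
        hb0 hbcol hc0 hccol

theorem sum_integral_lpPowP_le_sum_integral_rpow (hp : 1 ≤ p)
    (hf : ∀ j, MemLp (f j) (ENNReal.ofReal p) ν)
    (hb0 : ∀ i j, 0 ≤ b i j) (hbrow : ∀ i, ∑ j, b i j = 1) (hbcol : ∀ j, ∑ i, b i j = 1)
    (hc0 : ∀ i j, 0 ≤ c i j) (hcrow : ∀ i, ∑ j, c i j = 1) (hccol : ∀ j, ∑ i, c i j = 1) :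
    ∑ i, ∫ x, LpPowP p (∑ j, b i j * |f j x|) (∑ j, c i j * |f j x|) ∂ν ≤
      ∑ j, ∫ x, |f j x| ^ p ∂ν := by
  have hfp : ∀ j, Integrable (fun x => |f j x| ^ p) ν :=
    fun j => (hf j).integrable_abs_rpow (by linarith)
  rw [← integral_finsetSum _ fun i _ =>
      integrable_lpPowP_sum_mul_abs hp hf hb0 hbrow hbcol hc0 hcrow hccol i,
    ← integral_finsetSum _ fun j _ => hfp j]
  exact integral_mono_of_nonneg
    (ae_of_all _ fun x => sum_nonneg fun i _ =>
      lpPowP_sum_mul_nonneg hp (fun j => abs_nonneg _) hb0 hc0 i)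
    (integrable_finsetSum _ fun j _ => hfp j)
    (ae_of_all _ fun x => sum_lpPowP_le_sum_rpow hp (fun j => abs_nonneg _)
      hb0 hbrow hbcol hc0 hcrow hccol)

end Integral

theorem lp_norm_refinement_doubly_stochastic_general
    {X : Type*} [MeasurableSpace X] (ν : Measure X)
    (p : ℝ) (hp : 1 ≤ p)
    {n : ℕ}
    (f : Fin n → X → ℝ) (hf : ∀ j, MemLp (f j) (ENNReal.ofReal p) ν)
    (b c : Fin n → Fin n → ℝ)
    (hb0 : ∀ i j, 0 ≤ b i j) (hbrow : ∀ i, ∑ j, b i j = 1) (hbcol : ∀ j, ∑ i, b i j = 1)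
    (hc0 : ∀ i j, 0 ≤ c i j) (hcrow : ∀ i, ∑ j, c i j = 1) (hccol : ∀ j, ∑ i, c i j = 1) :
    (∫ x, |(∑ j, f j x) / n| ^ p ∂ν) ≤
        (n : ℝ)⁻¹ *
          ∑ i, ∫ x, |LpPowP p (∑ j, b i j * |f j x|) (∑ j, c i j * |f j x|)| ∂ν ∧
      ((n : ℝ)⁻¹ *
          ∑ i, ∫ x, |LpPowP p (∑ j, b i j * |f j x|) (∑ j, c i j * |f j x|)| ∂ν) ≤
        (∑ j, ∫ x, |f j x| ^ p ∂ν) / n := by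
  have habs : ∀ i x, |LpPowP p (∑ j, b i j * |f j x|) (∑ j, c i j * |f j x|)| =
      LpPowP p (∑ j, b i j * |f j x|) (∑ j, c i j * |f j x|) := fun i x =>
    abs_of_nonneg (lpPowP_sum_mul_nonneg hp (fun j => abs_nonneg _) hb0 hc0 i)
  simp only [habs]
  constructor
  · simpa using integral_rpow_abs_sum_div_card_le hp hf hb0 hbrow hbcol hc0 hcrow hccol
  · rw [div_eq_inv_mul]
    exact mul_le_mul_of_nonneg_left
      (sum_integral_lpPowP_le_sum_integral_rpow hp hf hb0 hbrow hbcol hc0 hcrow hccol)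
      (by positivity)

/-- Refinement of Jensen's inequality for the `p`-th power of the `L^p`-norm via two
doubly stochastic matrices, with the norms written as integrals. -/
theorem lp_norm_refinement_doubly_stochastic
    {X : Type*} [MeasurableSpace X] (ν : Measure X)
    (p : ℝ) (hp : 1 ≤ p)
    {n : ℕ} (hn : 0 < n)
    (f : Fin n → X → ℝ) (hf : ∀ j, MemLp (f j) (ENNReal.ofReal p) ν)
    (b c : Fin n → Fin n → ℝ)
    (hb0 : ∀ i j, 0 ≤ b i j) (hbrow : ∀ i, ∑ j, b i j = 1) (hbcol : ∀ j, ∑ i, b i j = 1)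
    (hc0 : ∀ i j, 0 ≤ c i j) (hcrow : ∀ i, ∑ j, c i j = 1) (hccol : ∀ j, ∑ i, c i j = 1) :
    (∫ x, |(∑ j, f j x) / n| ^ p ∂ν) ≤
        (n : ℝ)⁻¹ *
          ∑ i, ∫ x, |LpPowP p (∑ j, b i j * |f j x|) (∑ j, c i j * |f j x|)| ∂ν ∧
      ((n : ℝ)⁻¹ *
          ∑ i, ∫ x, |LpPowP p (∑ j, b i j * |f j x|) (∑ j, c i j * |f j x|)| ∂ν) ≤
        (∑ j, ∫ x, |f j x| ^ p ∂ν) / n :=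
  lp_norm_refinement_doubly_stochastic_general ν p hp f hf b c hb0 hbrow hbcol hc0 hcrow hccol
end
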